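/- (Scalar weak duality) Suppose x satisfies g(x) ≤ 0, and (u, y, z) satisfies ∇f(u) + Bz + Σⱼ yʲ∇gʲ(u) = 0, zᵀBz ≤ 1, y ≥ 0, with f(·) + (·)ᵀBz + yᵀg(·) pseudoinvex with respect to η. Then f(x) + (xᵀBx)^{1/2} ≥ f(u) + uᵀBz + yᵀg(u). -/

import Mathlib

open Matrix

/-- The gradient of `F` at `u`, as a vector in `ℝⁿ`. -/
noncomputable def grad {n : ℕ} (F : (Fin n → ℝ) → ℝ) (u : Fin n → ℝ) : Fin n → ℝ :=
  fun j => fderiv ℝ F u (Pi.single j 1)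

/-- `F` is pseudoinvex with respect to `η`. -/
def Pseudoinvex {n : ℕ} (F : (Fin n → ℝ) → ℝ)
    (η : (Fin n → ℝ) → (Fin n → ℝ) → Fin n → ℝ) : Prop :=
  ∀ x u, 0 ≤ η x u ⬝ᵥ grad F u → F u ≤ F x

/-- the map `v ↦ v ⬝ᵥ w` as a continuous linear map -/
noncomputable def dotCLM {n : ℕ} (w : Fin n → ℝ) : (Fin n → ℝ) →L[ℝ] ℝ :=
  ∑ i, (w i) • (ContinuousLinearMap.proj i)

lemma dotCLM_apply {n : ℕ} (w v : Fin n → ℝ) : dotCLM w v = v ⬝ᵥ w := by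
  simp [dotCLM, dotProduct, mul_comm]

lemma hasFDerivAt_dot {n : ℕ} (w u : Fin n → ℝ) :
    HasFDerivAt (fun v : Fin n → ℝ => v ⬝ᵥ w) (dotCLM w) u := by
  have : (fun v : Fin n → ℝ => v ⬝ᵥ w) = fun v => dotCLM w v := by
    funext v; rw [dotCLM_apply]
  rw [this]
  exact (dotCLM w).hasFDerivAt

/-- Cauchy–Schwarz for the dot product on `ℝⁿ`. -/
lemma dot_le_sqrt_mul_sqrt {n : ℕ} (a b : Fin n → ℝ) :
    a ⬝ᵥ b ≤ Real.sqrt (a ⬝ᵥ a) * Real.sqrt (b ⬝ᵥ b) := by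
  have h1 : (a ⬝ᵥ b) ^ 2 ≤ (a ⬝ᵥ a) * (b ⬝ᵥ b) := by
    have := Finset.sum_mul_sq_le_sq_mul_sq Finset.univ a b
    simpa [dotProduct, sq] using this
  calc a ⬝ᵥ b ≤ |a ⬝ᵥ b| := le_abs_self _
    _ = Real.sqrt ((a ⬝ᵥ b) ^ 2) := (Real.sqrt_sq_eq_abs _).symm
    _ ≤ Real.sqrt ((a ⬝ᵥ a) * (b ⬝ᵥ b)) := Real.sqrt_le_sqrt h1
    _ = Real.sqrt (a ⬝ᵥ a) * Real.sqrt (b ⬝ᵥ b) := Real.sqrt_mul (by simpa [dotProduct] using Finset.sum_nonneg fun i _ => mul_self_nonneg (a i)) _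

theorem scalar_weak_duality {n m : ℕ}
    (f : (Fin n → ℝ) → ℝ) (g : Fin m → (Fin n → ℝ) → ℝ)
    (hfd : Differentiable ℝ f) (hgd : ∀ j, Differentiable ℝ (g j))
    (B : Matrix (Fin n) (Fin n) ℝ) (hB : B.PosSemidef)
    (η : (Fin n → ℝ) → (Fin n → ℝ) → Fin n → ℝ)
    (x u z : Fin n → ℝ) (y : Fin m → ℝ)
    (hx : ∀ j, g j x ≤ 0)
    (hdual : grad f u + B.mulVec z + (∑ j, y j • grad (g j) u) = 0)
    (hz : z ⬝ᵥ B.mulVec z ≤ 1)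
    (hy : ∀ j, 0 ≤ y j)
    (hpseudo : Pseudoinvex (fun v => f v + v ⬝ᵥ B.mulVec z + ∑ j, y j * g j v) η) :
    f u + u ⬝ᵥ B.mulVec z + ∑ j, y j * g j u ≤ f x + Real.sqrt (x ⬝ᵥ B.mulVec x) := by
  set F : (Fin n → ℝ) → ℝ := fun v => f v + v ⬝ᵥ B.mulVec z + ∑ j, y j * g j v with hF
  -- derivative of F at u
  have hFderiv : HasFDerivAt F
      (fderiv ℝ f u + dotCLM (B.mulVec z) + ∑ j, y j • fderiv ℝ (g j) u) u := by
    apply HasFDerivAt.add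
    · exact ((hfd u).hasFDerivAt).add (hasFDerivAt_dot _ u)
    · exact HasFDerivAt.fun_sum fun j _ => ((hgd j u).hasFDerivAt).const_mul (y j)
  have hgradF : grad F u = 0 := by
    funext j
    have : fderiv ℝ F u = _ := hFderiv.fderiv
    simp only [grad, this]
    have h0 := congrFun hdual j
    simp only [Pi.add_apply, Pi.zero_apply, Finset.sum_apply, Pi.smul_apply,
      smul_eq_mul, grad] at h0 ⊢
    rw [ContinuousLinearMap.add_apply, ContinuousLinearMap.add_apply,
      ContinuousLinearMap.sum_apply, dotCLM_apply]
    simpa [dotProduct, Pi.single_apply] using h0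
  have hFux : F u ≤ F x := by
    apply hpseudo x u
    rw [hgradF]
    simp
  -- Cauchy-Schwarz part
  have hxz : x ⬝ᵥ B.mulVec z ≤ Real.sqrt (x ⬝ᵥ B.mulVec x) := by
    open scoped MatrixOrder in
    obtain ⟨C, hCH, hBC⟩ : ∃ C : Matrix (Fin n) (Fin n) ℝ, C.IsHermitian ∧ C * C = B :=
      ⟨CFC.sqrt B, (CFC.sqrt_nonneg B).posSemidef.isHermitian, CFC.sqrt_mul_sqrt_self B hB.nonneg⟩
    have key : ∀ a b : Fin n → ℝ, a ⬝ᵥ B.mulVec b = (C.mulVec a) ⬝ᵥ (C.mulVec b) := by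
      intro a b
      have hsymT : Cᵀ = C := by
        have := hCH.eq
        simpa using this
      have hv : a ᵥ* C = C *ᵥ a := by
        nth_rewrite 1 [← hsymT]
        rw [vecMul_transpose]
      rw [← hBC, ← mulVec_mulVec, dotProduct_mulVec (v := a), hv]
    have h1 := dot_le_sqrt_mul_sqrt (C.mulVec x) (C.mulVec z)
    rw [← key, ← key, ← key] at h1
    have h2 : Real.sqrt (z ⬝ᵥ B.mulVec z) ≤ 1 := by
      rw [show (1 : ℝ) = Real.sqrt 1 by simp]
      exact Real.sqrt_le_sqrt hz
    calc x ⬝ᵥ B.mulVec z ≤ Real.sqrt (x ⬝ᵥ B.mulVec x) * Real.sqrt (z ⬝ᵥ B.mulVec z) := h1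
      _ ≤ Real.sqrt (x ⬝ᵥ B.mulVec x) * 1 := by
          exact mul_le_mul_of_nonneg_left h2 (Real.sqrt_nonneg _)
      _ = Real.sqrt (x ⬝ᵥ B.mulVec x) := mul_one _
  have hsum : ∑ j, y j * g j x ≤ 0 :=
    Finset.sum_nonpos fun j _ => mul_nonpos_of_nonneg_of_nonpos (hy j) (hx j)
  calc f u + u ⬝ᵥ B.mulVec z + ∑ j, y j * g j u = F u := rfl
    _ ≤ F x := hFux
    _ = f x + x ⬝ᵥ B.mulVec z + ∑ j, y j * g j x := rfl
    _ ≤ f x + Real.sqrt (x ⬝ᵥ B.mulVec x) + 0 := by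
        exact add_le_add (add_le_add le_rfl hxz) hsum
    _ = f x + Real.sqrt (x ⬝ᵥ B.mulVec x) := by ring
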